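/- Let T be a finite tree on n vertices with adjacency matrix A, and for each k let m_k(T) denote the number of matchings of T with exactly k edges. Then the characteristic polynomial of A equals its matching polynomial: det(tI − A) = ∑_{k=0}^{⌊n/2⌋} (−1)^k m_k(T) t^{n−2k}. -/

import Mathlib

/-!
Expand `det (t I - A)` by the Leibniz formula. A permutation `σ` contributes only if it moves
every vertex it does not fix to a neighbour. In a forest such a `σ` is an involution, since a longer
cycle of `σ` would trace a cycle of the graph; so `σ` is the product of the transpositions along a
matching with `k` edges, its sign is `(-1) ^ k`, and its `n - 2k` fixed points each contribute `t`.
-/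

open Equiv Finset Polynomial

namespace SimpleGraph

variable {V : Type*} {G : SimpleGraph V}

def MovesAlongEdges (G : SimpleGraph V) (σ : Perm V) : Prop :=
  ∀ v, σ v ≠ v → G.Adj v (σ v)

/-- If `σ (σ v) ≠ v`, the orbit of `σ v` returns to `v` without crossing the edge `s(v, σ v)`,
contradicting that every edge of a forest is a bridge. -/
theorem IsAcyclic.involutive_of_movesAlongEdges [Finite V] (hG : G.IsAcyclic) {σ : Perm V}
    (hσ : G.MovesAlongEdges σ) : Function.Involutive σ := by
  intro v
  by_contra hv2
  have hv : σ v ≠ v := fun h => hv2 (by rw [h, h])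
  set H := G.deleteEdges {s(v, σ v)}
  have hbridge : ¬ H.Reachable (σ v) v := fun h =>
    isBridge_iff.mp (isAcyclic_iff_forall_adj_isBridge.mp hG (hσ v hv)) h.symm
  have hstep : ∀ w, H.Reachable (σ v) w → w ≠ v → H.Reachable (σ v) (σ w) := by
    intro w hw hwv
    by_cases hfix : σ w = w
    · rwa [hfix]
    refine hw.trans (Adj.reachable ?_)
    rw [deleteEdges_adj, Set.mem_singleton_iff, Sym2.eq_iff]
    exact ⟨hσ w hfix, by rintro (⟨h, -⟩ | ⟨rfl, h⟩) <;> contradiction⟩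
  have horbit : ∀ j, H.Reachable (σ v) ((σ ^ j) (σ v)) := by
    intro j
    induction j with
    | zero => rfl
    | succ j ih =>
      rw [pow_succ', Perm.mul_apply]
      exact hstep _ ih fun h => hbridge (by rwa [h] at ih)
  obtain ⟨i, -, hi⟩ := (Perm.sameCycle_apply_left.mpr (Perm.SameCycle.refl σ v)).exists_pow_eq'
  exact hbridge (by simpa only [hi] using horbit i)

def IsEdgeMatching (G : SimpleGraph V) (M : Finset (Sym2 V)) : Prop :=
  ↑M ⊆ G.edgeSet ∧ (M : Set (Sym2 V)).Pairwise fun e f => ∀ v, v ∈ e → v ∉ f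

open Classical in
noncomputable def matchingPartner (M : Finset (Sym2 V)) (v : V) : V :=
  if h : ∃ w, s(v, w) ∈ M then h.choose else v

namespace IsEdgeMatching

variable {M : Finset (Sym2 V)}

theorem matchingPartner_eq (hM : G.IsEdgeMatching M) {v w : V} (h : s(v, w) ∈ M) :
    matchingPartner M v = w := by
  have hex : ∃ w, s(v, w) ∈ M := ⟨w, h⟩
  rw [matchingPartner, dif_pos hex]
  by_contra hne
  refine hM.2 hex.choose_spec h ?_ v (Sym2.mem_mk_left _ _) (Sym2.mem_mk_left _ _)
  exact fun heq => hne (Sym2.congr_right.mp heq)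

theorem matchingPartner_eq_iff (hM : G.IsEdgeMatching M) {v w : V} :
    matchingPartner M v = w ∧ v ≠ w ↔ s(v, w) ∈ M := by
  refine ⟨fun ⟨hvw, hne⟩ => ?_, fun h => ⟨hM.matchingPartner_eq h, G.ne_of_adj (hM.1 h)⟩⟩
  rw [matchingPartner] at hvw
  split_ifs at hvw with hex
  · exact hvw ▸ hex.choose_spec
  · exact absurd hvw hne

theorem matchingPartner_involutive (hM : G.IsEdgeMatching M) :
    Function.Involutive (matchingPartner M) := by
  intro v
  by_cases hex : ∃ w, s(v, w) ∈ M
  · obtain ⟨w, h⟩ := hex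
    rw [hM.matchingPartner_eq h, hM.matchingPartner_eq (Sym2.eq_swap ▸ h)]
  · have hfix : matchingPartner M v = v := dif_neg hex
    rw [hfix, hfix]

noncomputable def toPerm (hM : G.IsEdgeMatching M) : Perm V :=
  hM.matchingPartner_involutive.toPerm

theorem toPerm_apply (hM : G.IsEdgeMatching M) (v : V) : hM.toPerm v = matchingPartner M v := rfl

theorem movesAlongEdges_toPerm (hM : G.IsEdgeMatching M) : G.MovesAlongEdges hM.toPerm := by
  intro v hv
  exact hM.1 (hM.matchingPartner_eq_iff.mp ⟨rfl, Ne.symm hv⟩)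

end IsEdgeMatching

end SimpleGraph

namespace Equiv.Perm

variable {V : Type*} [Fintype V] [DecidableEq V] {σ : Perm V}

/-- For an involution, the transpositions of `σ`. -/
def movedPairs (σ : Perm V) : Finset (Sym2 V) :=
  σ.support.image fun v => s(v, σ v)

theorem mk_mem_movedPairs_iff (hσ : Function.Involutive σ) {v w : V} :
    s(v, w) ∈ σ.movedPairs ↔ σ v = w ∧ v ≠ w := by
  simp only [movedPairs, mem_image, mem_support, Sym2.eq_iff]
  constructor
  · rintro ⟨u, hu, ⟨rfl, rfl⟩ | ⟨rfl, rfl⟩⟩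
    · exact ⟨rfl, Ne.symm hu⟩
    · exact ⟨hσ u, hu⟩
  · rintro ⟨rfl, hne⟩
    exact ⟨v, Ne.symm hne, Or.inl ⟨rfl, rfl⟩⟩

theorem eq_of_mem_movedPairs (hσ : Function.Involutive σ) {e : Sym2 V} {v : V}
    (he : e ∈ σ.movedPairs) (hv : v ∈ e) : e = s(v, σ v) := by
  induction e with | h a b => ?_
  obtain ⟨rfl, -⟩ := (mk_mem_movedPairs_iff hσ).mp he
  rcases Sym2.mem_iff.mp hv with rfl | rfl
  · rfl
  · rw [hσ, Sym2.eq_swap]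

theorem card_support_eq_two_mul_card_movedPairs (hσ : Function.Involutive σ) :
    #σ.support = 2 * #σ.movedPairs := by
  rw [card_eq_sum_card_image (fun v => s(v, σ v)) σ.support, ← movedPairs, mul_comm,
    ← smul_eq_mul, ← sum_const]
  refine sum_congr rfl fun e he => ?_
  obtain ⟨v, hv, rfl⟩ := mem_image.mp he
  have hfiber : {u ∈ σ.support | s(u, σ u) = s(v, σ v)} = {v, σ v} := by
    ext u
    simp only [mem_filter, mem_insert, mem_singleton]
    constructor
    · rintro ⟨-, h⟩
      exact Sym2.mem_iff.mp (h ▸ Sym2.mem_mk_left u (σ u))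
    · rintro (rfl | rfl)
      · exact ⟨hv, rfl⟩
      · exact ⟨by simpa [hσ v, eq_comm] using hv,
          (eq_of_mem_movedPairs hσ he (Sym2.mem_mk_right _ _)).symm⟩
  rw [hfiber, card_pair (Ne.symm (mem_support.mp hv))]

theorem sign_of_involutive (hσ : Function.Involutive σ) :
    sign σ = (-1) ^ #σ.movedPairs := by
  have hsq : σ ^ 2 = 1 := Equiv.ext fun v => hσ v
  rw [sign_of_pow_two_eq_one hsq, card_fixedPoints, sum_cycleType,
    Nat.sub_sub_self (card_le_univ _), card_support_eq_two_mul_card_movedPairs hσ,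
    Nat.mul_div_cancel_left _ two_pos]

end Equiv.Perm

namespace SimpleGraph

open Perm

variable {V : Type*} [Fintype V] [DecidableEq V] {G : SimpleGraph V} {σ : Perm V}
  {M : Finset (Sym2 V)}

theorem MovesAlongEdges.isEdgeMatching_movedPairs (hG : G.MovesAlongEdges σ)
    (hσ : Function.Involutive σ) : G.IsEdgeMatching σ.movedPairs := by
  refine ⟨fun e he => ?_, fun e he f hf hne v hve hvf => ?_⟩
  · obtain ⟨v, hv, rfl⟩ := mem_image.mp he
    exact hG v (Perm.mem_support.mp hv)
  · exact hne ((eq_of_mem_movedPairs hσ he hve).trans (eq_of_mem_movedPairs hσ hf hvf).symm)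

theorem IsEdgeMatching.movedPairs_toPerm (hM : G.IsEdgeMatching M) :
    hM.toPerm.movedPairs = M := by
  ext e
  induction e with | h v w => ?_
  exact (mk_mem_movedPairs_iff hM.matchingPartner_involutive).trans hM.matchingPartner_eq_iff

theorem MovesAlongEdges.toPerm_isEdgeMatching_movedPairs (hG : G.MovesAlongEdges σ)
    (hσ : Function.Involutive σ) : (hG.isEdgeMatching_movedPairs hσ).toPerm = σ := by
  set hM := hG.isEdgeMatching_movedPairs hσ
  ext v
  rw [IsEdgeMatching.toPerm_apply]
  by_cases hv : σ v = v
  · rw [hv]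
    by_contra hne
    obtain ⟨hσv, hvne⟩ :=
      (mk_mem_movedPairs_iff hσ).mp (hM.matchingPartner_eq_iff.mp ⟨rfl, Ne.symm hne⟩)
    exact hvne (hv.symm.trans hσv)
  · exact hM.matchingPartner_eq ((mk_mem_movedPairs_iff hσ).mpr ⟨rfl, Ne.symm hv⟩)

theorem IsEdgeMatching.two_mul_card_le (hM : G.IsEdgeMatching M) : 2 * #M ≤ Fintype.card V := by
  rw [← hM.movedPairs_toPerm,
    ← card_support_eq_two_mul_card_movedPairs hM.matchingPartner_involutive]
  exact card_le_univ _

variable {R : Type*} [CommRing R] [DecidableRel G.Adj]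

theorem prod_charmatrix_adjMatrix_of_not_movesAlongEdges (hσ : ¬ G.MovesAlongEdges σ) :
    ∏ v, (G.adjMatrix R).charmatrix (σ v) v = 0 := by
  obtain ⟨v, hv, hnadj⟩ : ∃ v, σ v ≠ v ∧ ¬ G.Adj v (σ v) := by
    simpa [MovesAlongEdges] using hσ
  refine prod_eq_zero (mem_univ v) ?_
  rw [Matrix.charmatrix_apply_ne _ _ _ hv, adjMatrix_apply, if_neg (fun h => hnadj h.symm),
    map_zero, neg_zero]

theorem prod_charmatrix_adjMatrix (hσ : G.MovesAlongEdges σ) :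
    ∏ v, (G.adjMatrix R).charmatrix (σ v) v =
      (-1) ^ #σ.support * X ^ (Fintype.card V - #σ.support) := by
  have hmoved : ∀ v ∈ σ.support, (G.adjMatrix R).charmatrix (σ v) v = -1 := fun v hv => by
    rw [Matrix.charmatrix_apply_ne _ _ _ (Perm.mem_support.mp hv), adjMatrix_apply,
      if_pos (hσ v (Perm.mem_support.mp hv)).symm, map_one]
  have hfixed : ∀ v ∈ σ.supportᶜ, (G.adjMatrix R).charmatrix (σ v) v = X := fun v hv => by
    rw [notMem_support.mp (mem_compl.mp hv), Matrix.charmatrix_apply_eq, adjMatrix_apply,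
      if_neg (G.loopless.irrefl v), map_zero, sub_zero]
  rw [← prod_mul_prod_compl σ.support, prod_congr rfl hmoved, prod_congr rfl hfixed, prod_const,
    prod_const, card_compl]

open Classical in
theorem charpoly_adjMatrix_eq_sum_movesAlongEdges :
    (G.adjMatrix R).charpoly = ∑ σ with G.MovesAlongEdges σ,
      ((sign σ : ℤ) : R[X]) * ((-1) ^ #σ.support * X ^ (Fintype.card V - #σ.support)) := by
  rw [Matrix.charpoly, Matrix.det_apply', ← sum_filter_add_sum_filter_not _ G.MovesAlongEdges,
    sum_eq_zero (s := {σ | ¬ G.MovesAlongEdges σ}) fun σ hσ => by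
      rw [prod_charmatrix_adjMatrix_of_not_movesAlongEdges (mem_filter.mp hσ).2, mul_zero],
    add_zero]
  exact sum_congr rfl fun σ hσ => by rw [prod_charmatrix_adjMatrix (mem_filter.mp hσ).2]

open Classical in
theorem IsAcyclic.charpoly_adjMatrix (hG : G.IsAcyclic) :
    (G.adjMatrix R).charpoly =
      ∑ M with G.IsEdgeMatching M, (-1) ^ #M * X ^ (Fintype.card V - 2 * #M) := by
  rw [charpoly_adjMatrix_eq_sum_movesAlongEdges]
  have hinv : ∀ σ ∈ ({σ | G.MovesAlongEdges σ} : Finset (Perm V)), Function.Involutive σ :=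
    fun σ hσ => hG.involutive_of_movesAlongEdges (mem_filter.mp hσ).2
  refine sum_bij' (fun σ _ => σ.movedPairs) (fun M hM => (mem_filter.mp hM).2.toPerm)
    (fun σ hσ => ?_) (fun M hM => ?_) (fun σ hσ => ?_) (fun M hM => ?_) (fun σ hσ => ?_)
  · exact mem_filter.mpr
      ⟨mem_univ _, (mem_filter.mp hσ).2.isEdgeMatching_movedPairs (hinv σ hσ)⟩
  · exact mem_filter.mpr ⟨mem_univ _, (mem_filter.mp hM).2.movesAlongEdges_toPerm⟩
  · exact (mem_filter.mp hσ).2.toPerm_isEdgeMatching_movedPairs (hinv σ hσ)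
  · exact (mem_filter.mp hM).2.movedPairs_toPerm
  · rw [sign_of_involutive (hinv σ hσ), card_support_eq_two_mul_card_movedPairs (hinv σ hσ),
      pow_mul, neg_one_sq, one_pow, one_mul]
    push_cast
    rfl

end SimpleGraph

/-- For a tree `T` on `n` vertices, the characteristic polynomial of its
adjacency matrix equals its matching polynomial:
`det(tI − A) = ∑_{k=0}^{⌊n/2⌋} (−1)^k m_k(T) t^{n − 2k}`,
where `m k` counts the matchings of `T` with exactly `k` edges. -/
theorem charpoly_tree_eq_matching_polynomial {V : Type*} [Fintype V] [DecidableEq V]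
    (T : SimpleGraph V) [DecidableRel T.Adj] (hT : T.IsTree)
    (m : ℕ → ℕ)
    (hm : ∀ k, m k = Set.ncard {s : Finset (Sym2 V) |
      ↑s ⊆ T.edgeSet ∧ s.card = k ∧
        (s : Set (Sym2 V)).Pairwise fun e f => ∀ v : V, v ∈ e → v ∉ f}) :
    (T.adjMatrix ℝ).charpoly =
      ∑ k ∈ Finset.range (Fintype.card V / 2 + 1),
        Polynomial.C ((-1 : ℝ) ^ k * (m k : ℝ)) *
          Polynomial.X ^ (Fintype.card V - 2 * k) := by
  classical
  have hcard : ∀ M ∈ ({M | T.IsEdgeMatching M} : Finset (Finset (Sym2 V))),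
      #M ∈ range (Fintype.card V / 2 + 1) := fun M hM => by
    have := (mem_filter.mp hM).2.two_mul_card_le
    rw [mem_range]
    omega
  have hmk : ∀ k, m k = #{M | T.IsEdgeMatching M ∧ #M = k} := fun k => by
    rw [hm k, ← Set.ncard_coe_finset]
    congr 1
    ext M
    simp [SimpleGraph.IsEdgeMatching, and_right_comm, and_assoc]
  rw [hT.isAcyclic.charpoly_adjMatrix, ← sum_fiberwise_of_maps_to hcard]
  refine sum_congr rfl fun k _ => ?_
  rw [sum_congr rfl fun M hM => by rw [(mem_filter.mp hM).2], sum_const, filter_filter, ← hmk,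
    nsmul_eq_mul, map_mul, map_pow, map_neg, map_one, map_natCast]
  ring
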